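/- Let d ≥ 4 be even and let G be the graph of the previous statement on (ZMod d) × (ZMod d) with the three edge families {(i,j+1),(i+1,j)}, {(1,j),(d-1,j+1)}, {(j,d-1),(j+1,0)} (indices in {0,...,d-2}), augmented by one additional edge {(0,0),(2,3)}. Then the augmented graph is connected. -/
import Mathlib

namespace Stmt3Aux

def rel (d : ℕ) (x y : ZMod d × ZMod d) : Prop :=
  (∃ i j : ℕ, i ≤ d - 2 ∧ j ≤ d - 2 ∧
    x = ((i : ZMod d), ((j + 1 : ℕ) : ZMod d)) ∧
    y = (((i + 1 : ℕ) : ZMod d), (j : ZMod d))) ∨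
  (∃ j : ℕ, j ≤ d - 2 ∧
    x = ((1 : ZMod d), (j : ZMod d)) ∧
    y = (((d - 1 : ℕ) : ZMod d), ((j + 1 : ℕ) : ZMod d))) ∨
  (∃ j : ℕ, j ≤ d - 2 ∧
    x = ((j : ZMod d), ((d - 1 : ℕ) : ZMod d)) ∧
    y = (((j + 1 : ℕ) : ZMod d), (0 : ZMod d))) ∨
  (x = ((0 : ZMod d), (0 : ZMod d)) ∧ y = ((2 : ZMod d), (3 : ZMod d)))

abbrev G (d : ℕ) : SimpleGraph (ZMod d × ZMod d) := SimpleGraph.fromRel (rel d)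

lemma cast_ne (d a b : ℕ) (ha : a < d) (hb : b < d) (h : a ≠ b) :
    (a : ZMod d) ≠ (b : ZMod d) := by
  intro he
  have := congrArg ZMod.val he
  rw [ZMod.val_cast_of_lt ha, ZMod.val_cast_of_lt hb] at this
  exact h this

lemma adjA (d i j : ℕ) (hd : 4 ≤ d) (hi : i ≤ d - 2) (hj : j ≤ d - 2) :
    (G d).Adj ((i : ZMod d), ((j + 1 : ℕ) : ZMod d)) (((i + 1 : ℕ) : ZMod d), (j : ZMod d)) := by
  rw [SimpleGraph.fromRel_adj]
  refine ⟨?_, Or.inl (Or.inl ⟨i, j, hi, hj, rfl, rfl⟩)⟩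
  intro h
  exact cast_ne d (j + 1) j (by omega) (by omega) (by omega) (Prod.ext_iff.mp h).2

lemma adjB (d j : ℕ) (hd : 4 ≤ d) (hj : j ≤ d - 2) :
    (G d).Adj (((1 : ℕ) : ZMod d), (j : ZMod d))
      (((d - 1 : ℕ) : ZMod d), ((j + 1 : ℕ) : ZMod d)) := by
  rw [SimpleGraph.fromRel_adj]
  refine ⟨?_, Or.inl (Or.inr (Or.inl ⟨j, hj, by norm_cast, rfl⟩))⟩
  intro h
  exact cast_ne d 1 (d - 1) (by omega) (by omega) (by omega) (Prod.ext_iff.mp h).1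

lemma adjC (d j : ℕ) (hd : 4 ≤ d) (hj : j ≤ d - 2) :
    (G d).Adj ((j : ZMod d), ((d - 1 : ℕ) : ZMod d))
      (((j + 1 : ℕ) : ZMod d), ((0 : ℕ) : ZMod d)) := by
  rw [SimpleGraph.fromRel_adj]
  refine ⟨?_, Or.inl (Or.inr (Or.inr (Or.inl ⟨j, hj, rfl, by norm_cast⟩)))⟩
  intro h
  exact cast_ne d (d - 1) 0 (by omega) (by omega) (by omega) (Prod.ext_iff.mp h).2

lemma adjE (d : ℕ) (hd : 4 ≤ d) :
    (G d).Adj (((0 : ℕ) : ZMod d), ((0 : ℕ) : ZMod d))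
      (((2 : ℕ) : ZMod d), ((3 : ℕ) : ZMod d)) := by
  rw [SimpleGraph.fromRel_adj]
  refine ⟨?_, Or.inl (Or.inr (Or.inr (Or.inr ⟨by norm_cast, by norm_cast⟩)))⟩
  intro h
  exact cast_ne d 0 2 (by omega) (by omega) (by omega) (Prod.ext_iff.mp h).1

lemma reach_diag (d : ℕ) (hd : 4 ≤ d) :
    ∀ k a b : ℕ, a + k ≤ d - 1 → k ≤ b → b ≤ d - 1 →
    (G d).Reachable ((a : ZMod d), (b : ZMod d))
      (((a + k : ℕ) : ZMod d), ((b - k : ℕ) : ZMod d)) := by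
  intro k
  induction k with
  | zero => intro a b _ _ _; simp only [Nat.add_zero, Nat.sub_zero]; exact SimpleGraph.Reachable.refl _
  | succ k ih =>
    intro a b h1 h2 h3
    have r1 := ih a b (by omega) (by omega) h3
    have e := adjA d (a + k) (b - (k + 1)) hd (by omega) (by omega)
    have hb : (b - (k + 1)) + 1 = b - k := by omega
    have ha : (a + k) + 1 = a + (k + 1) := by omega
    rw [hb, ha] at e
    exact r1.trans e.reachable

lemma reach_same_diag (d : ℕ) (hd : 4 ≤ d) (a b a' b' : ℕ)
    (hs : a + b = a' + b') (ha : a ≤ d - 1) (hb : b ≤ d - 1)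
    (ha' : a' ≤ d - 1) (hb' : b' ≤ d - 1) :
    (G d).Reachable ((a : ZMod d), (b : ZMod d)) ((a' : ZMod d), (b' : ZMod d)) := by
  rcases le_total a a' with h | h
  · have r := reach_diag d hd (a' - a) a b (by omega) (by omega) hb
    have e1 : a + (a' - a) = a' := by omega
    have e2 : b - (a' - a) = b' := by omega
    rwa [e1, e2] at r
  · have r := reach_diag d hd (a - a') a' b' (by omega) (by omega) hb'
    have e1 : a' + (a - a') = a := by omega
    have e2 : b' - (a - a') = b := by omega
    rw [e1, e2] at r
    exact r.symm

def rep (d s : ℕ) : ZMod d × ZMod d :=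
  if s ≤ d - 1 then (((0 : ℕ) : ZMod d), (s : ZMod d))
  else (((s - (d - 1) : ℕ) : ZMod d), ((d - 1 : ℕ) : ZMod d))

lemma reach_rep (d : ℕ) (hd : 4 ≤ d) (a b : ℕ) (ha : a ≤ d - 1) (hb : b ≤ d - 1) :
    (G d).Reachable ((a : ZMod d), (b : ZMod d)) (rep d (a + b)) := by
  unfold rep
  split
  · exact reach_same_diag d hd a b 0 (a + b) (by omega) ha hb (by omega) (by omega)
  · exact reach_same_diag d hd a b (a + b - (d - 1)) (d - 1) (by omega) ha hb (by omega) (by omega)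

lemma rep_reach_one (d : ℕ) (hd : 4 ≤ d) :
    ∀ s, 1 ≤ s → s ≤ 2 * d - 2 → (G d).Reachable (rep d s) (rep d 1) := by
  intro s
  induction s using Nat.strong_induction_on with
  | _ s ih =>
    intro h1 h2
    by_cases hs1 : s = 1
    · subst hs1; rfl
    by_cases hsd : s ≤ d - 1
    · -- 2 ≤ s ≤ d-1 : go up via C then down via B to s-1
      have hrep : rep d s = (((0 : ℕ) : ZMod d), (s : ZMod d)) := by
        unfold rep; rw [if_pos hsd]
      -- rep s ~ (s, 0)
      have r1 : (G d).Reachable (rep d s) ((s : ZMod d), ((0 : ℕ) : ZMod d)) := by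
        rw [hrep]
        exact reach_same_diag d hd 0 s s 0 (by omega) (by omega) hsd hsd (by omega)
      -- C edge with j = s-1 : (s-1, d-1) ~ (s, 0)
      have e1 := adjC d (s - 1) hd (by omega)
      have hs' : (s - 1) + 1 = s := by omega
      rw [hs'] at e1
      -- (s-1, d-1) ~ (d-1, s-1) on diag s+d-2
      have r2 : (G d).Reachable (((s - 1 : ℕ) : ZMod d), ((d - 1 : ℕ) : ZMod d))
          (((d - 1 : ℕ) : ZMod d), ((s - 1 : ℕ) : ZMod d)) :=
        reach_same_diag d hd (s - 1) (d - 1) (d - 1) (s - 1) (by omega) (by omega)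
          (by omega) (by omega) (by omega)
      -- B edge with j = s-2 : (1, s-2) ~ (d-1, s-1)
      have e2 := adjB d (s - 2) hd (by omega)
      have hs'' : (s - 2) + 1 = s - 1 := by omega
      rw [hs''] at e2
      -- (1, s-2) reaches rep (s-1)
      have r3 : (G d).Reachable (((1 : ℕ) : ZMod d), ((s - 2 : ℕ) : ZMod d)) (rep d (s - 1)) := by
        have := reach_rep d hd 1 (s - 2) (by omega) (by omega)
        have hss : 1 + (s - 2) = s - 1 := by omega
        rwa [hss] at this
      have := ((((r1.trans e1.symm.reachable).trans r2).trans e2.symm.reachable).trans r3)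
      exact this.trans (ih (s - 1) (by omega) (by omega) (by omega))
    · -- d ≤ s ≤ 2d-2 : down via B to s-(d-1)
      have hds : d ≤ s := by omega
      have hrep : rep d s = (((s - (d - 1) : ℕ) : ZMod d), ((d - 1 : ℕ) : ZMod d)) := by
        unfold rep; rw [if_neg hsd]
      have r1 : (G d).Reachable (rep d s)
          (((d - 1 : ℕ) : ZMod d), ((s - (d - 1) : ℕ) : ZMod d)) := by
        rw [hrep]
        exact reach_same_diag d hd (s - (d - 1)) (d - 1) (d - 1) (s - (d - 1)) (by omega)
          (by omega) (by omega) (by omega) (by omega)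
      have e := adjB d (s - d) hd (by omega)
      have hs' : (s - d) + 1 = s - (d - 1) := by omega
      rw [hs'] at e
      have r2 : (G d).Reachable (((1 : ℕ) : ZMod d), ((s - d : ℕ) : ZMod d))
          (rep d (s - (d - 1))) := by
        have := reach_rep d hd 1 (s - d) (by omega) (by omega)
        have hss : 1 + (s - d) = s - (d - 1) := by omega
        rwa [hss] at this
      have := (r1.trans e.symm.reachable).trans r2
      exact this.trans (ih (s - (d - 1)) (by omega) (by omega) (by omega))

lemma connected (d : ℕ) (hd : 4 ≤ d) : (G d).Connected := by
  haveI : NeZero d := ⟨by omega⟩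
  have key : ∀ v : ZMod d × ZMod d, (G d).Reachable v (rep d 1) := by
    intro v
    set a := v.1.val with ha
    set b := v.2.val with hb
    have hva : ((a : ℕ) : ZMod d) = v.1 := by
      rw [ha, ZMod.natCast_val, ZMod.cast_id]
    have hvb : ((b : ℕ) : ZMod d) = v.2 := by
      rw [hb, ZMod.natCast_val, ZMod.cast_id]
    have hv : v = ((a : ZMod d), (b : ZMod d)) := by
      rw [hva, hvb]
    have ha' : a ≤ d - 1 := by have := v.1.val_lt; omega
    have hb' : b ≤ d - 1 := by have := v.2.val_lt; omega
    by_cases h0 : a + b = 0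
    · -- v = (0,0); use the extra edge
      have ha0 : a = 0 := by omega
      have hb0 : b = 0 := by omega
      have hv0 : v = (((0 : ℕ) : ZMod d), ((0 : ℕ) : ZMod d)) := by
        rw [hv, ha0, hb0]
      have e := adjE d hd
      have r1 : (G d).Reachable (((2 : ℕ) : ZMod d), ((3 : ℕ) : ZMod d)) (rep d 5) := by
        have := reach_rep d hd 2 3 (by omega) (by omega)
        norm_num at this ⊢
        exact this
      have r2 := rep_reach_one d hd 5 (by omega) (by omega)
      rw [hv0]
      exact (e.reachable.trans r1).trans r2
    · have r1 : (G d).Reachable v (rep d (a + b)) := by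
        rw [hv]; exact reach_rep d hd a b ha' hb'
      exact r1.trans (rep_reach_one d hd (a + b) (by omega) (by omega))
  have hne : Nonempty (ZMod d × ZMod d) := ⟨(0, 0)⟩
  exact SimpleGraph.Connected.mk (fun u v => (key u).trans (key v).symm)

end Stmt3Aux

theorem stmt_3 (d : ℕ) (hd : 4 ≤ d) (heven : Even d) :
    (SimpleGraph.fromRel (fun x y : ZMod d × ZMod d =>
      (∃ i j : ℕ, i ≤ d - 2 ∧ j ≤ d - 2 ∧
        x = ((i : ZMod d), ((j + 1 : ℕ) : ZMod d)) ∧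
        y = (((i + 1 : ℕ) : ZMod d), (j : ZMod d))) ∨
      (∃ j : ℕ, j ≤ d - 2 ∧
        x = ((1 : ZMod d), (j : ZMod d)) ∧
        y = (((d - 1 : ℕ) : ZMod d), ((j + 1 : ℕ) : ZMod d))) ∨
      (∃ j : ℕ, j ≤ d - 2 ∧
        x = ((j : ZMod d), ((d - 1 : ℕ) : ZMod d)) ∧
        y = (((j + 1 : ℕ) : ZMod d), (0 : ZMod d))) ∨
      (x = ((0 : ZMod d), (0 : ZMod d)) ∧ y = ((2 : ZMod d), (3 : ZMod d))))).Connected := by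
  exact Stmt3Aux.connected d hd
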